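/- arXiv:2310.12726 — 3 statements merged into one kernel-verified Lean document; each statement's English description precedes it below -/
import Mathlib

section
/- For the depolarizing channel Λ_d(A) = (1−p)A + p·tr(A)·I/2^n on n qubits and any k with 1 ≤ k ≤ n, the average fidelity in the Γ_{2k} subspace, B_k = (−i)^k / (2^n C(n,k)) Σ_{x∈{0,1}^n} Σ_{S∈C([n],k)} (−1)^{Σ_{j∈S} x_j} tr(|x⟩⟨x| Λ_d(γ_{D(S)})), equals 1 − p, where D(S) = {2j−1, 2j : j ∈ S}. -/
open scoped BigOperators

/-- The Jordan–Wigner realization of `γ_{D(S)} = Π_{l ∈ S} (i Z_l)`: the diagonal matrix with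
entry `Π_{l ∈ S} i·(−1)^{x_l}` at the computational-basis state `x`. -/
noncomputable def gammaD (n : ℕ) (S : Finset (Fin n)) :
    Matrix (Fin n → Bool) (Fin n → Bool) ℂ :=
  Matrix.diagonal fun x => ∏ l ∈ S, (Complex.I * (if x l then (-1:ℂ) else 1))

/-- The average fidelity of a noise channel `Λ` in the `Γ_{2k}` subspace:
`B_k = (−i)^k/(2^n C(n,k)) Σ_x Σ_{|S|=k} (−1)^{Σ_{j∈S} x_j} tr(|x⟩⟨x| Λ(γ_{D(S)}))`. -/
noncomputable def Bk (n k : ℕ)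
    (Λ : Matrix (Fin n → Bool) (Fin n → Bool) ℂ → Matrix (Fin n → Bool) (Fin n → Bool) ℂ) : ℂ :=
  ((-Complex.I)^k / ((2:ℂ)^n * (n.choose k : ℂ))) *
    ∑ x : Fin n → Bool, ∑ S ∈ (Finset.univ : Finset (Fin n)).powersetCard k,
      (∏ j ∈ S, (if x j then (-1:ℂ) else 1)) *
        Matrix.trace (Matrix.single x x (1:ℂ) * Λ (gammaD n S))

/-- The depolarizing channel `Λ_d(A) = (1−p)A + p·tr(A)·I/2^n` on `n` qubits. -/
noncomputable def depo (n : ℕ) (p : ℝ) (A : Matrix (Fin n → Bool) (Fin n → Bool) ℂ) :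
    Matrix (Fin n → Bool) (Fin n → Bool) ℂ :=
  ((1 - p : ℝ) : ℂ) • A +
    ((p : ℂ) * A.trace) • (((2:ℂ)^n)⁻¹ • (1 : Matrix (Fin n → Bool) (Fin n → Bool) ℂ))

lemma sum_prod_sign_zero {n : ℕ} {S : Finset (Fin n)} (hS : S.Nonempty) (c : ℂ) :
    ∑ x : Fin n → Bool, ∏ l ∈ S, (c * (if x l then (-1:ℂ) else 1)) = 0 := by
  obtain ⟨j, hj⟩ := hS
  apply Finset.sum_ninvolution (fun x => Function.update x j (!x j))
  · intro x
    rw [← Finset.mul_prod_erase _ _ hj,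
      ← Finset.mul_prod_erase S (fun l => c * (if Function.update x j (!x j) l then (-1:ℂ) else 1)) hj]
    have hrest : ∏ l ∈ S.erase j, (c * (if Function.update x j (!x j) l then (-1:ℂ) else 1))
        = ∏ l ∈ S.erase j, (c * (if x l then (-1:ℂ) else 1)) := by
      refine Finset.prod_congr rfl fun l hl => ?_
      rw [Function.update_of_ne (Finset.ne_of_mem_erase hl)]
    rw [hrest, Function.update_self]
    cases x j <;> simp
  · intro x _ h
    have := congrFun h j
    simp at this
  · intro x; exact Finset.mem_univ _
  · intro x
    funext l
    by_cases h : l = j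
    · subst h; simp
    · simp [Function.update, h]

lemma trace_std_mul {n : ℕ} (x : Fin n → Bool) (M : Matrix (Fin n → Bool) (Fin n → Bool) ℂ) :
    Matrix.trace (Matrix.single x x (1:ℂ) * M) = M x x := by
  simp [Matrix.trace, Matrix.diag, Matrix.mul_apply, Matrix.single, ite_and]

/-- For the depolarizing channel with strength `p ∈ [0,1]` and any `1 ≤ k ≤ n`,
the average fidelity in the `Γ_{2k}` subspace equals `1 − p`. -/
theorem Bk_depolarizing (n k : ℕ) (p : ℝ) (hp0 : 0 ≤ p) (hp1 : p ≤ 1)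
    (hk : 1 ≤ k) (hkn : k ≤ n) :
    Bk n k (depo n p) = 1 - (p : ℂ) := by
  have hsum : ∀ x : Fin n → Bool, ∀ S ∈ (Finset.univ : Finset (Fin n)).powersetCard k,
      (∏ j ∈ S, (if x j then (-1:ℂ) else 1)) *
        Matrix.trace (Matrix.single x x (1:ℂ) * depo n p (gammaD n S))
      = (1 - (p:ℂ)) * Complex.I ^ k := by
    intro x S hS
    have hcard : S.card = k := (Finset.mem_powersetCard.mp hS).2
    have hSne : S.Nonempty := Finset.card_pos.mp (hcard ▸ hk)
    have htr : (gammaD n S).trace = 0 := by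
      rw [gammaD, Matrix.trace_diagonal]
      exact sum_prod_sign_zero hSne Complex.I
    rw [trace_std_mul]
    have hentry : depo n p (gammaD n S) x x
        = ((1 - p : ℝ) : ℂ) * ∏ l ∈ S, (Complex.I * (if x l then (-1:ℂ) else 1)) := by
      simp only [depo, htr, mul_zero, zero_smul, smul_zero, add_zero]
      simp [gammaD, Matrix.smul_apply, Matrix.diagonal_apply_eq]
    have hprod : (∏ j ∈ S, (if x j then (-1:ℂ) else 1)) *
        ∏ l ∈ S, (Complex.I * (if x l then (-1:ℂ) else 1)) = Complex.I ^ k := by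
      have h : ∀ l ∈ S, (if x l then (-1:ℂ) else 1) *
          (Complex.I * (if x l then (-1:ℂ) else 1)) = Complex.I := by
        intro l _; cases x l <;> simp
      rw [← Finset.prod_mul_distrib, Finset.prod_congr rfl h, Finset.prod_const, hcard]
    rw [hentry]
    push_cast
    rw [mul_left_comm, hprod]
  rw [Bk]
  rw [Finset.sum_congr rfl fun x _ => Finset.sum_congr rfl (hsum x)]
  simp only [Finset.sum_const, Finset.card_powersetCard, Finset.card_univ, Fintype.card_fun,
    Fintype.card_fin, Fintype.card_bool]
  have hchoose : ((n.choose k : ℂ)) ≠ 0 := by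
    exact_mod_cast (Nat.choose_pos hkn).ne'
  have h2 : ((2:ℂ)^n) ≠ 0 := pow_ne_zero _ two_ne_zero
  have hIk : Complex.I ^ k * (-Complex.I) ^ k = 1 := by
    rw [← mul_pow]; simp [mul_neg, Complex.I_mul_I]
  field_simp
  linear_combination ((2:ℂ)^n * (n.choose k : ℂ) * (1 - (p:ℂ))) * hIk
end

section
/- For natural numbers n ≥ 1 and 0 < k < n, the ratio C(2n,2k)/C(n,k)² is Θ(√(k(1 − k/n))); i.e., there exist universal constants c₁, c₂ > 0 such that c₁ √(k(n−k)/n) ≤ C(2n,2k)/C(n,k)² ≤ c₂ √(k(n−k)/n). -/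
open scoped BigOperators

private lemma sqrt_mul_le_sqrt_mul {a b x y : ℝ} (ha : 0 ≤ a) (hb : 0 ≤ b)
    (hx : 0 ≤ x) (h : a^2 * x ≤ b^2 * y) :
    a * Real.sqrt x ≤ b * Real.sqrt y := by
  have h1 : a * Real.sqrt x = Real.sqrt (a^2 * x) := by
    rw [Real.sqrt_mul (sq_nonneg a), Real.sqrt_sq ha]
  have h2 : b * Real.sqrt y = Real.sqrt (b^2 * y) := by
    rw [Real.sqrt_mul (sq_nonneg b), Real.sqrt_sq hb]
  rw [h1, h2]
  exact Real.sqrt_le_sqrt h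

/-- `4^m ≤ 2√m · B(m)` and `√(3m+1) · B(m) ≤ 4^m` for `m ≥ 1`. -/
private lemma cb_bounds : ∀ m : ℕ, 1 ≤ m →
    (4:ℝ)^m ≤ 2 * Real.sqrt m * (m.centralBinom : ℝ) ∧
    Real.sqrt (3*m+1) * (m.centralBinom : ℝ) ≤ (4:ℝ)^m := by
  intro m hm
  induction m, hm using Nat.le_induction with
  | base =>
    have : Nat.centralBinom 1 = 2 := rfl
    rw [this]
    constructor
    · simp [Real.sqrt_one]; norm_num
    · have : (3*((1:ℕ):ℝ)+1) = 2^2 := by norm_num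
      rw [this, Real.sqrt_sq (by norm_num)]; norm_num
  | succ m hm ih =>
    obtain ⟨ihl, ihr⟩ := ih
    have hB : (0:ℝ) < m.centralBinom := by exact_mod_cast m.centralBinom_pos
    have hB' : (0:ℝ) < (m+1).centralBinom := by exact_mod_cast (m+1).centralBinom_pos
    have hrec : ((m:ℝ)+1) * ((m+1).centralBinom : ℝ) = 2 * (2*m+1) * (m.centralBinom : ℝ) := by
      exact_mod_cast congrArg (Nat.cast (R := ℝ)) (Nat.succ_mul_centralBinom_succ m)
    have hm1 : (1:ℝ) ≤ (m:ℝ) := by exact_mod_cast hm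
    have hmpos : (0:ℝ) < (m:ℝ) + 1 := by linarith
    constructor
    · -- 4^(m+1) ≤ 2√(m+1) B(m+1)
      -- suffices: 4*(m+1)*2√m ≤ 2√(m+1)*2*(2m+1)  [times B(m)]
      have key : (4:ℝ) * ((m:ℝ)+1) * Real.sqrt m ≤ Real.sqrt ((m:ℝ)+1) * (2*(2*(m:ℝ)+1)) := by
        have := sqrt_mul_le_sqrt_mul (a := 4*((m:ℝ)+1)) (b := 2*(2*(m:ℝ)+1))
          (x := (m:ℝ)) (y := (m:ℝ)+1) (by positivity) (by positivity) (by positivity)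
          (by nlinarith)
        linarith [this]
      have step : (4:ℝ)^(m+1) * ((m:ℝ)+1) ≤ 2 * Real.sqrt ((m:ℝ)+1) * (2*(2*(m:ℝ)+1) * (m.centralBinom : ℝ)) := by
        have h1 : (4:ℝ)^(m+1) * ((m:ℝ)+1) = 4*((m:ℝ)+1) * (4:ℝ)^m := by ring
        rw [h1]
        calc 4*((m:ℝ)+1) * (4:ℝ)^m ≤ 4*((m:ℝ)+1) * (2 * Real.sqrt m * (m.centralBinom : ℝ)) := by
              apply mul_le_mul_of_nonneg_left ihl (by positivity)
          _ ≤ 2 * Real.sqrt ((m:ℝ)+1) * (2*(2*(m:ℝ)+1) * (m.centralBinom : ℝ)) := by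
              nlinarith [Real.sqrt_nonneg ((m:ℝ)+1), hB.le, key]
      have : (4:ℝ)^(m+1) * ((m:ℝ)+1) ≤ 2 * Real.sqrt ((m:ℝ)+1) * (((m:ℝ)+1) * ((m+1).centralBinom : ℝ)) := by
        rw [hrec]; linarith [step]
      have hcast : ((m+1:ℕ):ℝ) = (m:ℝ)+1 := by push_cast; ring
      rw [hcast]
      nlinarith [this, Real.sqrt_nonneg ((m:ℝ)+1), hB'.le]
    · -- √(3(m+1)+1) B(m+1) ≤ 4^(m+1)
      -- (m+1) * LHS = √(3m+4) * 2(2m+1) B(m) ≤ ... need √(3m+4)(2m+1) ≤ √(3m+1)*2(m+1)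
      have key : Real.sqrt (3*(m:ℝ)+4) * (2*(m:ℝ)+1) ≤ Real.sqrt (3*(m:ℝ)+1) * (2*((m:ℝ)+1)) := by
        have := sqrt_mul_le_sqrt_mul (a := 2*(m:ℝ)+1) (b := 2*((m:ℝ)+1))
          (x := 3*(m:ℝ)+4) (y := 3*(m:ℝ)+1) (by positivity) (by positivity) (by positivity)
          (by nlinarith)
        linarith [this]
      have step : Real.sqrt (3*(m:ℝ)+4) * (2*(2*(m:ℝ)+1) * (m.centralBinom : ℝ))
          ≤ 4*((m:ℝ)+1) * (Real.sqrt (3*(m:ℝ)+1) * (m.centralBinom : ℝ)) := by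
        nlinarith [key, hB.le]
      have step2 : 4*((m:ℝ)+1) * (Real.sqrt (3*(m:ℝ)+1) * (m.centralBinom : ℝ)) ≤ 4*((m:ℝ)+1) * (4:ℝ)^m := by
        apply mul_le_mul_of_nonneg_left ihr (by positivity)
      have hfin : Real.sqrt (3*(m:ℝ)+4) * (((m:ℝ)+1) * ((m+1).centralBinom : ℝ)) ≤ ((m:ℝ)+1) * (4:ℝ)^(m+1) := by
        rw [hrec]
        calc Real.sqrt (3*(m:ℝ)+4) * (2*(2*(m:ℝ)+1) * (m.centralBinom : ℝ))
            ≤ 4*((m:ℝ)+1) * (4:ℝ)^m := step.trans step2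
          _ = ((m:ℝ)+1) * (4:ℝ)^(m+1) := by rw [pow_succ]; ring
      have hcast2 : ((m+1:ℕ):ℝ) = (m:ℝ)+1 := by push_cast; ring
      rw [hcast2, show (3:ℝ)*((m:ℝ)+1)+1 = 3*(m:ℝ)+4 by ring]
      nlinarith [hfin, Real.sqrt_nonneg (3*(m:ℝ)+4), hB'.le]

set_option maxHeartbeats 1000000 in
/-- For `n ≥ 1` and `0 < k < n`, the ratio `C(2n,2k)/C(n,k)²` is `Θ(√(k(1 − k/n)))`:
there exist universal constants `c₁, c₂ > 0` with
`c₁ √(k(n−k)/n) ≤ C(2n,2k)/C(n,k)² ≤ c₂ √(k(n−k)/n)`. -/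
theorem central_binom_ratio_theta :
    ∃ c₁ c₂ : ℝ, 0 < c₁ ∧ 0 < c₂ ∧
      ∀ n k : ℕ, 1 ≤ n → 0 < k → k < n →
        c₁ * Real.sqrt ((k : ℝ) * ((n : ℝ) - k) / n)
            ≤ ((2*n).choose (2*k) : ℝ) / ((n.choose k : ℝ))^2 ∧
        ((2*n).choose (2*k) : ℝ) / ((n.choose k : ℝ))^2
            ≤ c₂ * Real.sqrt ((k : ℝ) * ((n : ℝ) - k) / n) := by
  refine ⟨3/2, 4/Real.sqrt 3, by norm_num, by positivity, ?_⟩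
  intro n k hn hk hkn
  set m := n - k with hm
  have hm1 : 1 ≤ m := by omega
  have hk1 : 1 ≤ k := hk
  have hkm : k + m = n := by omega
  -- real casts
  have hcastm : ((m:ℕ):ℝ) = (n:ℝ) - k := by
    have : ((k:ℝ)) + m = n := by exact_mod_cast congrArg (Nat.cast (R := ℝ)) hkm
    linarith
  set a := Real.sqrt k with ha
  set b := Real.sqrt m with hb
  set c := Real.sqrt n with hc
  have hapos : 0 < a := Real.sqrt_pos.2 (by exact_mod_cast hk)
  have hbpos : 0 < b := Real.sqrt_pos.2 (by exact_mod_cast hm1)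
  have hcpos : 0 < c := Real.sqrt_pos.2 (by exact_mod_cast hn)
  have hsqrt : Real.sqrt ((k : ℝ) * ((n : ℝ) - k) / n) = a * b / c := by
    rw [← hcastm, Real.sqrt_div (by positivity), Real.sqrt_mul (by positivity)]
  -- ratio identity
  have hBk : (0:ℝ) < k.centralBinom := by exact_mod_cast k.centralBinom_pos
  have hBm : (0:ℝ) < m.centralBinom := by exact_mod_cast m.centralBinom_pos
  have hBn : (0:ℝ) < n.centralBinom := by exact_mod_cast n.centralBinom_pos
  have hCnk : (0:ℝ) < n.choose k := by exact_mod_cast Nat.choose_pos hkn.le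
  have hid : ((2*n).choose (2*k) : ℝ) / ((n.choose k : ℝ))^2
      = (n.centralBinom : ℝ) / ((k.centralBinom : ℝ) * (m.centralBinom : ℝ)) := by
    rw [div_eq_div_iff (by positivity) (by positivity)]
    -- via factorials
    have e1 : ((2*n).choose (2*k) : ℝ) = ((2*n).factorial) / (((2*k).factorial) * ((2*m).factorial)) := by
      rw [Nat.cast_choose ℝ (by omega), show 2*n-2*k = 2*m from by omega]
    have e2 : ((n.choose k) : ℝ) = (n.factorial) / ((k.factorial) * (m.factorial)) := by
      rw [Nat.cast_choose ℝ hkn.le]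
    have e3 : (n.centralBinom : ℝ) = ((2*n).factorial) / ((n.factorial) * (n.factorial)) := by
      rw [Nat.centralBinom, Nat.cast_choose ℝ (by omega), show 2*n-n = n from by omega]
    have e4 : (k.centralBinom : ℝ) = ((2*k).factorial) / ((k.factorial) * (k.factorial)) := by
      rw [Nat.centralBinom, Nat.cast_choose ℝ (by omega), show 2*k-k = k from by omega]
    have e5 : (m.centralBinom : ℝ) = ((2*m).factorial) / ((m.factorial) * (m.factorial)) := by
      rw [Nat.centralBinom, Nat.cast_choose ℝ (by omega), show 2*m-m = m from by omega]
    have f1 : (((2*n).factorial) : ℝ) ≠ 0 := by exact_mod_cast (2*n).factorial_ne_zero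
    have f2 : (((2*k).factorial) : ℝ) ≠ 0 := by exact_mod_cast (2*k).factorial_ne_zero
    have f3 : (((2*m).factorial) : ℝ) ≠ 0 := by exact_mod_cast (2*m).factorial_ne_zero
    have f4 : ((n.factorial) : ℝ) ≠ 0 := by exact_mod_cast n.factorial_ne_zero
    have f5 : ((k.factorial) : ℝ) ≠ 0 := by exact_mod_cast k.factorial_ne_zero
    have f6 : ((m.factorial) : ℝ) ≠ 0 := by exact_mod_cast m.factorial_ne_zero
    rw [e1, e2, e3, e4, e5]
    field_simp
  rw [hid, hsqrt]
  -- bounds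
  obtain ⟨lk, uk⟩ := cb_bounds k hk1
  obtain ⟨lm, um⟩ := cb_bounds m hm1
  obtain ⟨ln, un⟩ := cb_bounds n hn
  have h4 : (4:ℝ)^k * (4:ℝ)^m = (4:ℝ)^n := by rw [← pow_add, hkm]
  -- weaken upper bounds: √(3x+1) ≥ √(3x) = √3 * √x
  have s3 : (0:ℝ) < Real.sqrt 3 := Real.sqrt_pos.2 (by norm_num)
  have wk : Real.sqrt 3 * a * (k.centralBinom : ℝ) ≤ (4:ℝ)^k := by
    refine le_trans ?_ uk
    have : Real.sqrt 3 * a ≤ Real.sqrt (3*(k:ℝ)+1) := by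
      rw [ha, ← Real.sqrt_mul (by norm_num)]
      apply Real.sqrt_le_sqrt; linarith
    nlinarith [hBk.le]
  have wm : Real.sqrt 3 * b * (m.centralBinom : ℝ) ≤ (4:ℝ)^m := by
    refine le_trans ?_ um
    have : Real.sqrt 3 * b ≤ Real.sqrt (3*(m:ℝ)+1) := by
      rw [hb, ← Real.sqrt_mul (by norm_num)]
      apply Real.sqrt_le_sqrt; linarith
    nlinarith [hBm.le]
  have wn : Real.sqrt 3 * c * (n.centralBinom : ℝ) ≤ (4:ℝ)^n := by
    refine le_trans ?_ un
    have : Real.sqrt 3 * c ≤ Real.sqrt (3*(n:ℝ)+1) := by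
      rw [hc, ← Real.sqrt_mul (by norm_num)]
      apply Real.sqrt_le_sqrt; linarith
    nlinarith [hBn.le]
  have h3 : Real.sqrt 3 ^ 2 = 3 := Real.sq_sqrt (by norm_num)
  constructor
  · -- lower: 3/2 * (a*b/c) ≤ Bn/(Bk*Bm)
    rw [show (3:ℝ)/2*(a*b/c) = (3*(a*b))/(2*c) by ring,
      div_le_div_iff₀ (by positivity) (by positivity)]
    -- (3ab)(Bk Bm) = (√3 a Bk)(√3 b Bm) ≤ 4^k 4^m = 4^n ≤ 2 c Bn
    have m1 : (Real.sqrt 3 * a * (k.centralBinom:ℝ)) * (Real.sqrt 3 * b * (m.centralBinom:ℝ))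
        ≤ (4:ℝ)^k * (4:ℝ)^m :=
      mul_le_mul wk wm (by positivity) (by positivity)
    have m2 : 3 * (a*b) * ((k.centralBinom:ℝ) * (m.centralBinom:ℝ)) ≤ 2 * c * (n.centralBinom:ℝ) := by
      have : (Real.sqrt 3 * a * (k.centralBinom:ℝ)) * (Real.sqrt 3 * b * (m.centralBinom:ℝ))
          = 3 * (a*b) * ((k.centralBinom:ℝ) * (m.centralBinom:ℝ)) := by
        rw [show (Real.sqrt 3 * a * (k.centralBinom:ℝ)) * (Real.sqrt 3 * b * (m.centralBinom:ℝ))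
          = Real.sqrt 3^2 * (a*b) * ((k.centralBinom:ℝ) * (m.centralBinom:ℝ)) by ring, h3]
      rw [← this]
      calc _ ≤ (4:ℝ)^k * (4:ℝ)^m := m1
        _ = (4:ℝ)^n := h4
        _ ≤ 2 * c * (n.centralBinom:ℝ) := ln
    nlinarith [m2]
  · -- upper
    rw [show (4:ℝ)/Real.sqrt 3*(a*b/c) = (4*(a*b))/(Real.sqrt 3*c) by ring,
      div_le_div_iff₀ (by positivity) (by positivity)]
    -- Bn * c ≤ 4/√3 * (ab) * (Bk Bm) ... need √3 c Bn ≤ 4 ab Bk Bm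
    have m1 : (4:ℝ)^k * (4:ℝ)^m ≤ (2*a*(k.centralBinom:ℝ)) * (2*b*(m.centralBinom:ℝ)) :=
      mul_le_mul (by linarith [lk]) (by linarith [lm]) (by positivity) (by positivity)
    have m2 : Real.sqrt 3 * c * (n.centralBinom:ℝ) ≤ 4*(a*b)*((k.centralBinom:ℝ)*(m.centralBinom:ℝ)) := by
      calc Real.sqrt 3 * c * (n.centralBinom:ℝ) ≤ (4:ℝ)^n := wn
        _ = (4:ℝ)^k * (4:ℝ)^m := h4.symm
        _ ≤ (2*a*(k.centralBinom:ℝ)) * (2*b*(m.centralBinom:ℝ)) := m1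
        _ = 4*(a*b)*((k.centralBinom:ℝ)*(m.centralBinom:ℝ)) := by ring
    nlinarith [m2]
end

section
/- Define g(l,k) = [C(2n,2k)² C(n; l, k−l, l)²] / [C(n,k)⁴ C(2n; 2l, 2k−2l, 2l)] for 0 ≤ l ≤ min(k, n−k), where C(m; a,b,c) = m!/(a!b!c!(m−a−b−c)!). Then max_{0≤k≤n} Σ_{l=0}^{min(k,n−k)} g(l,k) = O(√n · log n). -/
open scoped BigOperators

/-- The real multinomial coefficient `C(m; a,b,c) = m!/(a! b! c! (m−a−b−c)!)`. -/
noncomputable def rmult (m a b c : ℕ) : ℝ :=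
  (m.factorial : ℝ) /
    ((a.factorial : ℝ) * (b.factorial : ℝ) * (c.factorial : ℝ) * ((m - a - b - c).factorial : ℝ))

/-- `g(l,k) = C(2n,2k)² C(n;l,k−l,l)² / (C(n,k)⁴ C(2n;2l,2k−2l,2l))`. -/
noncomputable def gfun (n l k : ℕ) : ℝ :=
  (((2*n).choose (2*k) : ℝ))^2 * (rmult n l (k - l) l)^2 /
    (((n.choose k : ℝ))^4 * rmult (2*n) (2*l) (2*k - 2*l) (2*l))

/-! ### Central binomial coefficient bounds -/

lemma cb_sq_upper (m : ℕ) : (m+1) * (Nat.centralBinom m)^2 ≤ 16^m := by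
  induction m with
  | zero => simp [Nat.centralBinom]
  | succ n ih =>
    have key : (n+1) * (n+1).centralBinom = 2 * (2*n+1) * n.centralBinom :=
      Nat.succ_mul_centralBinom_succ n
    have k2 : ((n+1) * (n+1).centralBinom)^2 = (2*(2*n+1)*n.centralBinom)^2 := by rw [key]
    have h3 : (n+1+1) * (n+1).centralBinom^2 * (n+1)^3 ≤ 16^(n+1) * (n+1)^3 := by
      have e : (n+1+1) * (n+1).centralBinom^2 * (n+1)^3
          = (4*(2*n+1)^2*(n+2)) * ((n+1) * n.centralBinom^2) := by
        have e2 : (n+1)^2 * (n+1).centralBinom^2 = 4*(2*n+1)^2*n.centralBinom^2 := by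
          nlinarith [k2]
        nlinarith [e2]
      rw [e]
      calc (4*(2*n+1)^2*(n+2)) * ((n+1) * n.centralBinom^2)
          ≤ (4*(2*n+1)^2*(n+2)) * 16^n := Nat.mul_le_mul_left _ ih
        _ ≤ 16^(n+1) * (n+1)^3 := by
            have : (4*(2*n+1)^2*(n+2)) ≤ 16*(n+1)^3 := by nlinarith
            calc (4*(2*n+1)^2*(n+2)) * 16^n ≤ (16*(n+1)^3) * 16^n :=
                  Nat.mul_le_mul_right _ this
              _ = 16^(n+1) * (n+1)^3 := by ring
    exact Nat.le_of_mul_le_mul_right h3 (by positivity)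

lemma cb_sq_lower (m : ℕ) (hm : 1 ≤ m) : 16^m ≤ 4*m*(Nat.centralBinom m)^2 := by
  induction m, hm using Nat.le_induction with
  | base => decide
  | succ n hn ih =>
    have key : (n+1) * (n+1).centralBinom = 2 * (2*n+1) * n.centralBinom :=
      Nat.succ_mul_centralBinom_succ n
    have k2 : ((n+1) * (n+1).centralBinom)^2 = (2*(2*n+1)*n.centralBinom)^2 := by rw [key]
    have e2 : (n+1)^2 * (n+1).centralBinom^2 = 4*(2*n+1)^2*n.centralBinom^2 := by
      nlinarith [k2]
    have h3 : 16^(n+1) * (n+1)^2 ≤ 4*(n+1) * (n+1).centralBinom^2 * (n+1)^2 := by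
      have e : 4*(n+1) * (n+1).centralBinom^2 * (n+1)^2
          = (16*(2*n+1)^2*(n+1)) * n.centralBinom^2 := by nlinarith [e2]
      rw [e]
      calc 16^(n+1) * (n+1)^2 = (16*(n+1)^2) * 16^n := by ring
        _ ≤ (16*(n+1)^2) * (4*n*n.centralBinom^2) := Nat.mul_le_mul_left _ ih
        _ ≤ (16*(2*n+1)^2*(n+1)) * n.centralBinom^2 := by nlinarith [sq_nonneg n.centralBinom]
    exact Nat.le_of_mul_le_mul_right h3 (by positivity)

noncomputable def cbR (m : ℕ) : ℝ := ((2*m).choose m : ℝ)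

lemma cbR_eq (m : ℕ) : cbR m = (Nat.centralBinom m : ℝ) := by
  simp [cbR, Nat.centralBinom]

lemma cbR_pos (m : ℕ) : 0 < cbR m := by
  have := Nat.choose_pos (show m ≤ 2*m by omega)
  simp only [cbR]; exact_mod_cast this

lemma cbR_zero : cbR 0 = 1 := by simp [cbR]

lemma cbR_sq_le (m : ℕ) (hm : 1 ≤ m) : (m : ℝ) * (cbR m)^2 ≤ 4^(2*m) := by
  have h2 : (m:ℝ) * (cbR m)^2 ≤ (((m+1) * (Nat.centralBinom m)^2 : ℕ) : ℝ) := by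
    rw [cbR_eq]; push_cast; nlinarith [sq_nonneg ((Nat.centralBinom m : ℝ))]
  calc (m:ℝ) * (cbR m)^2 ≤ (((m+1) * (Nat.centralBinom m)^2 : ℕ) : ℝ) := h2
    _ ≤ ((16^m : ℕ) : ℝ) := by exact_mod_cast cb_sq_upper m
    _ = 4^(2*m) := by push_cast; rw [pow_mul]; norm_num

lemma cbR_sq_ge (m : ℕ) (hm : 1 ≤ m) : (4:ℝ)^(2*m) ≤ 4 * m * (cbR m)^2 := by
  calc (4:ℝ)^(2*m) = ((16^m : ℕ) : ℝ) := by push_cast; rw [pow_mul]; norm_num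
    _ ≤ ((4*m*(Nat.centralBinom m)^2 : ℕ) : ℝ) := by exact_mod_cast cb_sq_lower m hm
    _ = 4 * m * (cbR m)^2 := by rw [cbR_eq]; push_cast; ring

lemma cbR_le (m : ℕ) (hm : 1 ≤ m) : cbR m ≤ 4^m / Real.sqrt m := by
  have hsm : 0 < Real.sqrt m := Real.sqrt_pos.2 (by exact_mod_cast hm)
  rw [le_div_iff₀ hsm]
  have h0 : 0 ≤ cbR m * Real.sqrt m := mul_nonneg (cbR_pos m).le (Real.sqrt_nonneg _)
  have hsq : (cbR m * Real.sqrt m)^2 ≤ ((4:ℝ)^m)^2 := by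
    have : (cbR m * Real.sqrt m)^2 = (m : ℝ) * (cbR m)^2 := by
      rw [mul_pow, Real.sq_sqrt (Nat.cast_nonneg m)]; ring
    rw [this, ← pow_mul, mul_comm m 2]
    exact cbR_sq_le m hm
  nlinarith [hsq, h0, pow_pos (show (0:ℝ) < 4 by norm_num) m]

lemma cbR_ge (m : ℕ) (hm : 1 ≤ m) : 4^m / (2 * Real.sqrt m) ≤ cbR m := by
  have hsm : 0 < Real.sqrt m := Real.sqrt_pos.2 (by exact_mod_cast hm)
  rw [div_le_iff₀ (by positivity)]
  have h0 : 0 ≤ cbR m * (2 * Real.sqrt m) := mul_nonneg (cbR_pos m).le (by positivity)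
  have hsq : ((4:ℝ)^m)^2 ≤ (cbR m * (2 * Real.sqrt m))^2 := by
    have : (cbR m * (2 * Real.sqrt m))^2 = 4 * (m : ℝ) * (cbR m)^2 := by
      rw [mul_pow, mul_pow, Real.sq_sqrt (Nat.cast_nonneg m)]; ring
    rw [this, ← pow_mul, mul_comm m 2]
    exact cbR_sq_ge m hm
  nlinarith [hsq, h0, pow_pos (show (0:ℝ) < 4 by norm_num) m]

lemma cast_cb (m : ℕ) : cbR m = ((2*m).factorial : ℝ) / (m.factorial * m.factorial) := by
  rw [cbR, Nat.cast_choose ℝ (by omega : m ≤ 2*m), show 2*m - m = m from by omega]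

/-! ### Closed form of `gfun` -/

lemma gfun_closed (l b d : ℕ) :
    gfun (2*l+b+d) l (l+b)
      = cbR (2*l+b+d) * (cbR l)^2 * cbR b * cbR d / ((cbR (l+b))^2 * (cbR (l+d))^2) := by
  have F : ∀ m : ℕ, (0:ℝ) < (m.factorial : ℝ) := fun m => by
    exact_mod_cast m.factorial_pos
  unfold gfun rmult
  rw [show l + b - l = b by omega, show 2*(l+b) - 2*l = 2*b by omega,
    show 2*l+b+d - l - b - l = d by omega,
    show 2*(2*l+b+d) - 2*l - (2*b) - 2*l = 2*d by omega,
    Nat.cast_choose ℝ (by omega : 2*(l+b) ≤ 2*(2*l+b+d)),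
    show 2*(2*l+b+d) - 2*(l+b) = 2*(l+d) by omega,
    Nat.cast_choose ℝ (by omega : l+b ≤ 2*l+b+d),
    show 2*l+b+d - (l+b) = l+d by omega,
    cast_cb (2*l+b+d), cast_cb l, cast_cb b, cast_cb d, cast_cb (l+b), cast_cb (l+d)]
  have e1 := F l; have e2 := F b; have e3 := F d; have e4 := F (l+b); have e5 := F (l+d)
  have e6 := F (2*l+b+d); have e7 := F (2*l); have e8 := F (2*b); have e9 := F (2*d)
  have e10 := F (2*(l+b)); have e11 := F (2*(l+d)); have e12 := F (2*(2*l+b+d))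
  field_simp

lemma gfun_nonneg (n l k : ℕ) (hl : l ≤ k) (hk : k ≤ n) (hl2 : l ≤ n - k) :
    0 ≤ gfun n l k := by
  have h := gfun_closed l (k - l) (n - k - l)
  rw [show 2*l + (k-l) + (n-k-l) = n by omega, show l + (k-l) = k by omega,
    show l + (n-k-l) = n - k by omega] at h
  rw [h]
  have := cbR_pos n; have := cbR_pos l; have := cbR_pos (k-l); have := cbR_pos (n-k-l)
  have := cbR_pos k; have := cbR_pos (n-k)
  positivity

/-! ### Per-term bounds -/

lemma interior_bound (l b d : ℕ) (hl : 1 ≤ l) (hb : 1 ≤ b) (hd : 1 ≤ d) :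
    gfun (2*l+b+d) l (l+b)
      ≤ 16 * ((l:ℝ)+b) * ((l:ℝ)+d) /
          (Real.sqrt ((2*l+b+d : ℕ) : ℝ) * l * Real.sqrt b * Real.sqrt d) := by
  have sn : (0:ℝ) < Real.sqrt ((2*l+b+d : ℕ) : ℝ) := Real.sqrt_pos.2 (by exact_mod_cast by omega)
  have sb : (0:ℝ) < Real.sqrt (b : ℝ) := Real.sqrt_pos.2 (by exact_mod_cast hb)
  have sd : (0:ℝ) < Real.sqrt (d : ℝ) := Real.sqrt_pos.2 (by exact_mod_cast hd)
  have lpos : (0:ℝ) < (l:ℝ) := by exact_mod_cast hl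
  have lbpos : (0:ℝ) < ((l:ℝ)+b) := by positivity
  have ldpos : (0:ℝ) < ((l:ℝ)+d) := by positivity
  -- numerator bound
  have hA : cbR (2*l+b+d) * (cbR l)^2 * cbR b * cbR d
      ≤ (4^(2*l+b+d) / Real.sqrt ((2*l+b+d : ℕ) : ℝ)) * (4^(2*l)/(l:ℝ)) *
        (4^b / Real.sqrt (b:ℝ)) * (4^d / Real.sqrt (d:ℝ)) := by
    have h1 := cbR_le (2*l+b+d) (by omega)
    have h2 : (cbR l)^2 ≤ 4^(2*l)/(l:ℝ) := by
      rw [le_div_iff₀ lpos]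
      have := cbR_sq_le l hl; linarith
    have h3 := cbR_le b hb
    have h4 := cbR_le d hd
    have p1 := cbR_pos (2*l+b+d); have p2 := cbR_pos l; have p3 := cbR_pos b
    have p4 := cbR_pos d
    have q2 : (0:ℝ) ≤ (cbR l)^2 := by positivity
    calc cbR (2*l+b+d) * (cbR l)^2 * cbR b * cbR d
        ≤ (4^(2*l+b+d) / Real.sqrt ((2*l+b+d : ℕ) : ℝ)) * (cbR l)^2 * cbR b * cbR d := by
          apply mul_le_mul_of_nonneg_right _ p4.le
          apply mul_le_mul_of_nonneg_right _ p3.le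
          exact mul_le_mul_of_nonneg_right h1 q2
      _ ≤ (4^(2*l+b+d) / Real.sqrt ((2*l+b+d : ℕ) : ℝ)) * (4^(2*l)/(l:ℝ)) * cbR b * cbR d := by
          apply mul_le_mul_of_nonneg_right _ p4.le
          apply mul_le_mul_of_nonneg_right _ p3.le
          exact mul_le_mul_of_nonneg_left h2 (by positivity)
      _ ≤ (4^(2*l+b+d) / Real.sqrt ((2*l+b+d : ℕ) : ℝ)) * (4^(2*l)/(l:ℝ)) *
            (4^b / Real.sqrt (b:ℝ)) * cbR d := by
          apply mul_le_mul_of_nonneg_right _ p4.le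
          exact mul_le_mul_of_nonneg_left h3 (by positivity)
      _ ≤ _ := mul_le_mul_of_nonneg_left h4 (by positivity)
  -- denominator bound
  have hB : (4:ℝ)^(2*(l+b))/(4*((l:ℝ)+b)) * (4^(2*(l+d))/(4*((l:ℝ)+d)))
      ≤ (cbR (l+b))^2 * (cbR (l+d))^2 := by
    have h1 : (4:ℝ)^(2*(l+b))/(4*((l:ℝ)+b)) ≤ (cbR (l+b))^2 := by
      rw [div_le_iff₀ (by positivity)]
      have := cbR_sq_ge (l+b) (by omega); push_cast at this ⊢; linarith
    have h2 : (4:ℝ)^(2*(l+d))/(4*((l:ℝ)+d)) ≤ (cbR (l+d))^2 := by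
      rw [div_le_iff₀ (by positivity)]
      have := cbR_sq_ge (l+d) (by omega); push_cast at this ⊢; linarith
    have := cbR_pos (l+b); have := cbR_pos (l+d)
    apply mul_le_mul h1 h2 (by positivity) (by positivity)
  have hBpos : (0:ℝ) < (4:ℝ)^(2*(l+b))/(4*((l:ℝ)+b)) * (4^(2*(l+d))/(4*((l:ℝ)+d))) := by
    positivity
  rw [gfun_closed]
  calc cbR (2*l+b+d) * (cbR l)^2 * cbR b * cbR d / ((cbR (l+b))^2 * (cbR (l+d))^2)
      ≤ ((4^(2*l+b+d) / Real.sqrt ((2*l+b+d : ℕ) : ℝ)) * (4^(2*l)/(l:ℝ)) *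
          (4^b / Real.sqrt (b:ℝ)) * (4^d / Real.sqrt (d:ℝ))) /
        ((4:ℝ)^(2*(l+b))/(4*((l:ℝ)+b)) * (4^(2*(l+d))/(4*((l:ℝ)+d)))) := by
        apply div_le_div₀ (by positivity) hA hBpos hB
    _ = 16 * ((l:ℝ)+b) * ((l:ℝ)+d) /
          (Real.sqrt ((2*l+b+d : ℕ) : ℝ) * l * Real.sqrt b * Real.sqrt d) := by
        field_simp
        ring

lemma edge_ratio (x j : ℕ) (hj : 1 ≤ j) :
    cbR (x+2*j) * cbR x / cbR (x+j)^2 ≤ 4 * Real.sqrt ((x+2*j : ℕ) : ℝ) := by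
  have sn : (0:ℝ) < Real.sqrt ((x+2*j : ℕ) : ℝ) := Real.sqrt_pos.2 (by exact_mod_cast by omega)
  have msn : Real.sqrt ((x+2*j : ℕ) : ℝ) * Real.sqrt ((x+2*j : ℕ) : ℝ) = ((x+2*j : ℕ) : ℝ) :=
    Real.mul_self_sqrt (by positivity)
  have xjpos : (0:ℝ) < ((x:ℝ)+j) := by
    have : (0:ℝ) < (j:ℝ) := by exact_mod_cast hj
    positivity
  have hden : (4:ℝ)^(2*(x+j))/(4*((x:ℝ)+j)) ≤ cbR (x+j)^2 := by
    rw [div_le_iff₀ (by positivity)]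
    have := cbR_sq_ge (x+j) (by omega); push_cast at this ⊢; linarith
  have hdenpos : (0:ℝ) < (4:ℝ)^(2*(x+j))/(4*((x:ℝ)+j)) := by positivity
  rcases Nat.eq_zero_or_pos x with rfl | hx
  · -- x = 0
    simp only [Nat.zero_add, zero_add] at *
    have hnum : cbR (2*j) * cbR 0 ≤ 4^(2*j) / Real.sqrt ((2*j : ℕ) : ℝ) := by
      rw [cbR_zero, mul_one]; exact cbR_le _ (by omega)
    calc cbR (2*j) * cbR 0 / cbR j^2
        ≤ (4^(2*j) / Real.sqrt ((2*j : ℕ) : ℝ)) / ((4:ℝ)^(2*j)/(4*(j:ℝ))) := by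
          apply div_le_div₀ (by positivity) hnum (by positivity)
          simpa using hden
      _ = 4*(j:ℝ) / Real.sqrt ((2*j : ℕ) : ℝ) := by
          field_simp
      _ ≤ 4 * Real.sqrt ((2*j : ℕ) : ℝ) := by
          rw [div_le_iff₀ sn]
          have : (j:ℝ) ≤ ((2*j : ℕ) : ℝ) := by push_cast; linarith [hj]
          nlinarith [msn, sn]
  · -- x ≥ 1
    have sx : (0:ℝ) < Real.sqrt ((x:ℕ) : ℝ) := Real.sqrt_pos.2 (by exact_mod_cast hx)
    have sx1 : (1:ℝ) ≤ Real.sqrt ((x:ℕ) : ℝ) := by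
      rw [show (1:ℝ) = Real.sqrt 1 by simp]
      exact Real.sqrt_le_sqrt (by exact_mod_cast hx)
    have hnum : cbR (x+2*j) * cbR x
        ≤ (4^(x+2*j) / Real.sqrt ((x+2*j : ℕ) : ℝ)) * (4^x / Real.sqrt ((x:ℕ) : ℝ)) := by
      apply mul_le_mul (cbR_le _ (by omega)) (cbR_le _ (by omega)) (cbR_pos x).le
        (by positivity)
    calc cbR (x+2*j) * cbR x / cbR (x+j)^2
        ≤ ((4^(x+2*j) / Real.sqrt ((x+2*j : ℕ) : ℝ)) * (4^x / Real.sqrt ((x:ℕ) : ℝ))) /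
            ((4:ℝ)^(2*(x+j))/(4*((x:ℝ)+j))) := by
          apply div_le_div₀ (by positivity) hnum hdenpos hden
      _ = 4*((x:ℝ)+j) / (Real.sqrt ((x+2*j : ℕ) : ℝ) * Real.sqrt ((x:ℕ) : ℝ)) := by
          field_simp; ring
      _ ≤ 4*((x:ℝ)+j) / (Real.sqrt ((x+2*j : ℕ) : ℝ) * 1) := by
          apply div_le_div_of_nonneg_left (by positivity) (by positivity)
          exact mul_le_mul_of_nonneg_left sx1 sn.le
      _ ≤ 4 * Real.sqrt ((x+2*j : ℕ) : ℝ) := by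
          rw [mul_one, div_le_iff₀ sn]
          have : (x:ℝ)+j ≤ ((x+2*j : ℕ) : ℝ) := by push_cast; linarith [hj]
          nlinarith [msn, sn]

lemma edge_zero (b d : ℕ) (h : 1 ≤ b + d) :
    gfun (b+d) 0 b ≤ 4 * Real.sqrt ((b+d : ℕ) : ℝ) := by
  have sn : (0:ℝ) < Real.sqrt ((b+d : ℕ) : ℝ) := Real.sqrt_pos.2 (by exact_mod_cast h)
  have sn1 : (1:ℝ) ≤ Real.sqrt ((b+d : ℕ) : ℝ) := by
    rw [show (1:ℝ) = Real.sqrt 1 by simp]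
    exact Real.sqrt_le_sqrt (by exact_mod_cast h)
  have msn : Real.sqrt ((b+d : ℕ) : ℝ) * Real.sqrt ((b+d : ℕ) : ℝ) = ((b+d : ℕ) : ℝ) :=
    Real.mul_self_sqrt (by positivity)
  have hcf := gfun_closed 0 b d
  simp only [Nat.mul_zero, Nat.zero_add, zero_add] at hcf
  rcases Nat.eq_zero_or_pos b with rfl | hb
  · simp only [Nat.zero_add, zero_add] at *
    have e : gfun d 0 0 = 1 := by
      rw [hcf, cbR_zero]; field_simp [(cbR_pos d).ne']
    rw [e]; linarith
  rcases Nat.eq_zero_or_pos d with rfl | hd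
  · simp only [Nat.add_zero, add_zero] at *
    have e : gfun b 0 b = 1 := by
      rw [hcf, cbR_zero]; field_simp [(cbR_pos b).ne']
    rw [e]; linarith
  have sb : (0:ℝ) < Real.sqrt (b:ℝ) := Real.sqrt_pos.2 (by exact_mod_cast hb)
  have sd : (0:ℝ) < Real.sqrt (d:ℝ) := Real.sqrt_pos.2 (by exact_mod_cast hd)
  have e : gfun (b+d) 0 b = cbR (b+d) / (cbR b * cbR d) := by
    rw [hcf, cbR_zero]; field_simp [(cbR_pos b).ne', (cbR_pos d).ne']
  rw [e]
  have hden : (4:ℝ)^b/(2*Real.sqrt (b:ℝ)) * (4^d/(2*Real.sqrt (d:ℝ))) ≤ cbR b * cbR d := by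
    apply mul_le_mul (cbR_ge b hb) (cbR_ge d hd) (by positivity) (cbR_pos b).le
  calc cbR (b+d) / (cbR b * cbR d)
      ≤ (4^(b+d) / Real.sqrt ((b+d : ℕ) : ℝ)) /
          ((4:ℝ)^b/(2*Real.sqrt (b:ℝ)) * (4^d/(2*Real.sqrt (d:ℝ)))) := by
        apply div_le_div₀ (by positivity) (cbR_le _ h) (by positivity) hden
    _ = 4*(Real.sqrt (b:ℝ) * Real.sqrt (d:ℝ)) / Real.sqrt ((b+d : ℕ) : ℝ) := by
        field_simp; ring
    _ ≤ 4 * Real.sqrt ((b+d : ℕ) : ℝ) := by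
        rw [div_le_iff₀ sn]
        have hbd : Real.sqrt (b:ℝ) * Real.sqrt (d:ℝ) ≤ ((b+d:ℕ):ℝ) := by
          rw [← Real.sqrt_mul (Nat.cast_nonneg b)]
          have h1 : ((b:ℝ)*d) ≤ (((b+d:ℕ):ℝ))^2 := by push_cast; nlinarith
          calc Real.sqrt ((b:ℝ)*d) ≤ Real.sqrt ((((b+d:ℕ):ℝ))^2) := Real.sqrt_le_sqrt h1
            _ = ((b+d:ℕ):ℝ) := Real.sqrt_sq (by positivity)
        nlinarith [msn, sn]

lemma edge_bot (n k : ℕ) (hkn : k ≤ n) (hn : 1 ≤ n) :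
    gfun n 0 k ≤ 4 * Real.sqrt (n : ℝ) := by
  have := edge_zero k (n-k) (by omega)
  rw [show k+(n-k) = n by omega] at this
  exact this

lemma edge_top (n k : ℕ) (hkn : k ≤ n) (hm : 1 ≤ min k (n-k)) :
    gfun n (min k (n-k)) k ≤ 4 * Real.sqrt (n : ℝ) := by
  rcases le_or_gt k (n-k) with h | h
  · rw [min_eq_left h]
    have hcf := gfun_closed k 0 (n-2*k)
    rw [show 2*k+0+(n-2*k) = n by omega, show k+0 = k by omega,
      show k+(n-2*k) = n-k by omega] at hcf
    have e : gfun n k k = cbR n * cbR (n-2*k) / cbR (n-k)^2 := by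
      rw [hcf, cbR_zero]
      field_simp [(cbR_pos k).ne', (cbR_pos (n-k)).ne']
    rw [e]
    have h2 := edge_ratio (n-2*k) k (by omega)
    rw [show (n-2*k)+2*k = n by omega, show (n-2*k)+k = n-k by omega] at h2
    exact h2
  · rw [min_eq_right h.le]
    have hcf := gfun_closed (n-k) (2*k-n) 0
    rw [show 2*(n-k)+(2*k-n)+0 = n by omega, show (n-k)+(2*k-n) = k by omega,
      show (n-k)+0 = n-k by omega] at hcf
    have e : gfun n (n-k) k = cbR n * cbR (2*k-n) / cbR k^2 := by
      rw [hcf, cbR_zero]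
      field_simp [(cbR_pos k).ne', (cbR_pos (n-k)).ne']
    rw [e]
    have h2 := edge_ratio (2*k-n) (n-k) (by omega)
    rw [show (2*k-n)+2*(n-k) = n by omega, show (2*k-n)+(n-k) = k by omega] at h2
    exact h2

lemma interior_bound' (n k l : ℕ) (hkn : k ≤ n) (hl : 1 ≤ l) (hlm : l < min k (n-k)) :
    gfun n l k ≤ 16 * Real.sqrt (n : ℝ) * (1/(l:ℝ) + 1/((min k (n-k) - l : ℕ):ℝ)) := by
  set m := min k (n-k) with hmdef
  clear_value m
  have hmm : m = min k (n-k) := hmdef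
  have hb : 1 ≤ k - l := by omega
  have hd : 1 ≤ n - k - l := by omega
  have key := interior_bound l (k-l) (n-k-l) hl hb hd
  rw [show 2*l+(k-l)+(n-k-l) = n by omega, show l + (k-l) = k by omega] at key
  have e1 : (l:ℝ)+(k-l:ℕ) = (k:ℝ) := by
    have : l + (k-l) = k := by omega
    exact_mod_cast this
  have e2 : (l:ℝ)+(n-k-l:ℕ) = ((n-k:ℕ):ℝ) := by
    have : l + (n-k-l) = n-k := by omega
    exact_mod_cast this
  rw [e1, e2] at key
  have sn : (0:ℝ) < Real.sqrt (n:ℝ) := Real.sqrt_pos.2 (by exact_mod_cast by omega)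
  have msn : Real.sqrt (n:ℝ) * Real.sqrt (n:ℝ) = (n:ℝ) := Real.mul_self_sqrt (by positivity)
  have lpos : (0:ℝ) < (l:ℝ) := by exact_mod_cast hl
  have mlpos : (0:ℝ) < ((m-l:ℕ):ℝ) := by exact_mod_cast (by omega : 0 < m - l)
  have sb : (0:ℝ) < Real.sqrt ((k-l:ℕ):ℝ) := Real.sqrt_pos.2 (by exact_mod_cast hb)
  have sd : (0:ℝ) < Real.sqrt ((n-k-l:ℕ):ℝ) := Real.sqrt_pos.2 (by exact_mod_cast hd)
  have step1 : (16:ℝ) * k * ((n-k:ℕ):ℝ) /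
      (Real.sqrt (n:ℝ) * l * Real.sqrt ((k-l:ℕ):ℝ) * Real.sqrt ((n-k-l:ℕ):ℝ))
      ≤ 16 * (n:ℝ) * (m:ℝ) / (Real.sqrt (n:ℝ) * l * ((m-l:ℕ):ℝ)) := by
    apply div_le_div₀ (by positivity)
    · have hnum : (k:ℝ) * ((n-k:ℕ):ℝ) ≤ (n:ℝ) * (m:ℝ) := by
        have : k * (n-k) ≤ n * m := by
          rcases min_choice k (n-k) with hc | hc <;> rw [hmm, hc] <;> nlinarith [Nat.sub_le n k, hkn]
        exact_mod_cast this
      nlinarith [hnum]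
    · positivity
    · have hsb : ((m-l:ℕ):ℝ) ≤ Real.sqrt ((k-l:ℕ):ℝ) * Real.sqrt ((n-k-l:ℕ):ℝ) := by
        have h1 : Real.sqrt ((m-l:ℕ):ℝ) ≤ Real.sqrt ((k-l:ℕ):ℝ) :=
          Real.sqrt_le_sqrt (by exact_mod_cast (by omega : m - l ≤ k - l))
        have h2 : Real.sqrt ((m-l:ℕ):ℝ) ≤ Real.sqrt ((n-k-l:ℕ):ℝ) :=
          Real.sqrt_le_sqrt (by exact_mod_cast (by omega : m - l ≤ n - k - l))
        have h3 : Real.sqrt ((m-l:ℕ):ℝ) * Real.sqrt ((m-l:ℕ):ℝ) = ((m-l:ℕ):ℝ) :=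
          Real.mul_self_sqrt (by positivity)
        nlinarith [Real.sqrt_nonneg ((m-l:ℕ):ℝ), Real.sqrt_nonneg ((k-l:ℕ):ℝ)]
      calc Real.sqrt (n:ℝ) * l * ((m-l:ℕ):ℝ)
          ≤ Real.sqrt (n:ℝ) * l * (Real.sqrt ((k-l:ℕ):ℝ) * Real.sqrt ((n-k-l:ℕ):ℝ)) :=
            mul_le_mul_of_nonneg_left hsb (by positivity)
        _ = Real.sqrt (n:ℝ) * l * Real.sqrt ((k-l:ℕ):ℝ) * Real.sqrt ((n-k-l:ℕ):ℝ) := by ring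
  have step2 : 16 * (n:ℝ) * (m:ℝ) / (Real.sqrt (n:ℝ) * l * ((m-l:ℕ):ℝ))
      = 16 * Real.sqrt (n:ℝ) * (1/(l:ℝ) + 1/((m-l:ℕ):ℝ)) := by
    have hml : ((m-l:ℕ):ℝ) = (m:ℝ) - l := by
      have : l ≤ m := by omega
      push_cast [Nat.cast_sub this]; ring
    have hml0 : (m:ℝ) - l ≠ 0 := by rw [← hml]; exact mlpos.ne'
    rw [hml]
    rw [hml] at mlpos
    generalize hgen : Real.sqrt (n:ℝ) = s at msn sn
    rw [← msn]
    have hs0 : s ≠ 0 := sn.ne'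
    field_simp
    ring
  calc gfun n l k ≤ _ := key
    _ ≤ 16 * (n:ℝ) * (m:ℝ) / (Real.sqrt (n:ℝ) * l * ((m-l:ℕ):ℝ)) := step1
    _ = _ := step2

lemma harmonic_sum_bound (m n : ℕ) (hm : 1 ≤ m) (hmn : m ≤ n) (hn : 2 ≤ n) :
    ∑ l ∈ Finset.Ico 1 m, (1/(l:ℝ) + 1/((m - l : ℕ):ℝ)) ≤ 2*(1 + Real.log n) := by
  have hcast : (harmonic (m-1) : ℝ) = ∑ i ∈ Finset.range (m-1), 1/((i+1 : ℕ):ℝ) := by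
    rw [harmonic]; push_cast; simp [one_div]
  have e1 : ∑ l ∈ Finset.Ico 1 m, (1/(l:ℝ)) = (harmonic (m-1) : ℝ) := by
    rw [Finset.sum_Ico_eq_sum_range, hcast]
    apply Finset.sum_congr rfl
    intro i _
    norm_num [Nat.add_comm]
  have e2 : ∑ l ∈ Finset.Ico 1 m, (1/((m - l : ℕ):ℝ)) = (harmonic (m-1) : ℝ) := by
    rw [Finset.sum_Ico_eq_sum_range, hcast]
    rw [← Finset.sum_range_reflect (fun i => 1/((i+1 : ℕ):ℝ)) (m-1)]
    apply Finset.sum_congr rfl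
    intro i hi
    simp only [Finset.mem_range] at hi
    congr 2
    omega
  have hsplit : ∑ l ∈ Finset.Ico 1 m, (1/(l:ℝ) + 1/((m - l : ℕ):ℝ))
      = (harmonic (m-1) : ℝ) + (harmonic (m-1) : ℝ) := by
    rw [Finset.sum_add_distrib, e1, e2]
  rw [hsplit]
  have hb : (harmonic (m-1) : ℝ) ≤ 1 + Real.log (m-1 : ℕ) := harmonic_le_one_add_log _
  have hlog : Real.log ((m-1 : ℕ) : ℝ) ≤ Real.log n := by
    rcases Nat.eq_zero_or_pos (m-1) with h0 | hpos
    · rw [h0]; simp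
      exact Real.log_nonneg (by exact_mod_cast Nat.one_le_of_lt hn)
    · apply Real.log_le_log (by exact_mod_cast hpos)
      exact_mod_cast by omega
  linarith

/-- `max_{0≤k≤n} Σ_{l=0}^{min(k,n−k)} g(l,k) = O(√n · log n)`. -/
theorem max_sum_g_bigO :
    ∃ C : ℝ, 0 < C ∧ ∀ n : ℕ, 2 ≤ n →
      ((Finset.range (n+1)).sup' (by simp) fun k =>
          ∑ l ∈ Finset.range (min k (n - k) + 1), gfun n l k)
        ≤ C * Real.sqrt n * Real.log n := by
  refine ⟨128, by norm_num, ?_⟩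
  intro n hn
  apply Finset.sup'_le
  intro k hk
  rw [Finset.mem_range] at hk
  have hkn : k ≤ n := by omega
  have hn1 : (1:ℝ) ≤ (n:ℝ) := by exact_mod_cast Nat.one_le_of_lt hn
  have sn : 0 < Real.sqrt (n:ℝ) := Real.sqrt_pos.2 (by linarith)
  have hlog2 : (0.6931471803:ℝ) < Real.log 2 := Real.log_two_gt_d9
  have hlogn : Real.log 2 ≤ Real.log n := Real.log_le_log (by norm_num) (by exact_mod_cast hn)
  have hlogpos : 0 ≤ Real.log n := Real.log_nonneg hn1
  obtain ⟨m, hmdef⟩ : ∃ m, m = min k (n-k) := ⟨_, rfl⟩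
  rw [← hmdef]
  have key : ∑ l ∈ Finset.range (m+1), gfun n l k
      ≤ 8*Real.sqrt (n:ℝ) + 32*Real.sqrt (n:ℝ) * (1 + Real.log n) := by
    rcases Nat.eq_zero_or_pos m with h0 | hm1
    · rw [h0, Finset.sum_range_one]
      have h := edge_bot n k hkn (by omega)
      nlinarith [sn, mul_nonneg sn.le hlogpos]
    · have hsplit : ∑ l ∈ Finset.range (m+1), gfun n l k
          = gfun n 0 k + ∑ l ∈ Finset.Ico 1 m, gfun n l k + gfun n m k := by
        rw [Finset.sum_range_succ, Finset.range_eq_Ico,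
          Finset.sum_eq_sum_Ico_succ_bot hm1]
      rw [hsplit]
      have h1 := edge_bot n k hkn (by omega)
      have h3 := edge_top n k hkn (by omega)
      rw [← hmdef] at h3
      have h2 : ∑ l ∈ Finset.Ico 1 m, gfun n l k
          ≤ 16*Real.sqrt (n:ℝ) * (2*(1 + Real.log n)) := by
        calc ∑ l ∈ Finset.Ico 1 m, gfun n l k
            ≤ ∑ l ∈ Finset.Ico 1 m, 16*Real.sqrt (n:ℝ) * (1/(l:ℝ) + 1/((m - l : ℕ):ℝ)) := by
              apply Finset.sum_le_sum
              intro l hl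
              rw [Finset.mem_Ico] at hl
              have hb := interior_bound' n k l hkn hl.1 (by omega)
              rw [← hmdef] at hb
              exact hb
          _ = 16*Real.sqrt (n:ℝ) * ∑ l ∈ Finset.Ico 1 m, (1/(l:ℝ) + 1/((m - l : ℕ):ℝ)) := by
              rw [Finset.mul_sum]
          _ ≤ 16*Real.sqrt (n:ℝ) * (2*(1 + Real.log n)) := by
              apply mul_le_mul_of_nonneg_left _ (by positivity)
              exact harmonic_sum_bound m n hm1 (by omega) hn
      nlinarith [sn, mul_nonneg sn.le hlogpos]
  have hp : Real.log 2 * Real.sqrt (n:ℝ) ≤ Real.log n * Real.sqrt (n:ℝ) :=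
    mul_le_mul_of_nonneg_right hlogn sn.le
  have hq : (0.6931471803:ℝ) * Real.sqrt (n:ℝ) ≤ Real.log 2 * Real.sqrt (n:ℝ) :=
    mul_le_mul_of_nonneg_right hlog2.le sn.le
  calc _ ≤ 8*Real.sqrt (n:ℝ) + 32*Real.sqrt (n:ℝ) * (1 + Real.log n) := key
    _ ≤ 128 * Real.sqrt n * Real.log n := by nlinarith [hp, hq, sn]
end
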